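/- arXiv:0706.3081 — 3 statements merged into one kernel-verified Lean document; each statement's English description precedes it below -/
import Mathlib

section
/- Let T > 0, α > 0, β > 0, c ≥ 0, K > 0, and let u : [0,T] → ℝ be continuous with u(0) ≥ −K. Suppose that for every t ∈ [0,T) with u(t) ≤ 0 one has D₊u(t) ≥ (α + β) u(t)² − β c². Then for every t ∈ [0,T], u(t) ≥ min{ −1/(α t + 1/K), −c }. -/
open Set Filter

noncomputable section

/-- The lower right Dini derivative `D₊u(t) = liminf_{h→0⁺} (u(t+h) − u(t))/h`. -/
noncomputable def diniLower (u : ℝ → ℝ) (t : ℝ) : ℝ :=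
  Filter.liminf (fun h : ℝ => (u (t + h) - u t) / h) (nhdsWithin 0 (Ioi 0))

private lemma dini_ev {u : ℝ → ℝ} {t L' : ℝ} (h0 : 0 ≤ L') (h : L' < diniLower u t) :
    ∀ᶠ h' in nhdsWithin (0:ℝ) (Ioi 0), L' < (u (t + h') - u t) / h' := by
  set q : ℝ → ℝ := fun h' => (u (t + h') - u t) / h' with hq
  set S : Set ℝ := {a | ∀ᶠ h' in nhdsWithin (0:ℝ) (Ioi 0), a ≤ q h'} with hS
  have hmap : diniLower u t = sSup S := by
    rw [diniLower, Filter.liminf_eq]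
  rcases S.eq_empty_or_nonempty with hSe | hSne
  · rw [hmap, hSe, Real.sSup_empty] at h; linarith
  · by_cases hbdd : BddAbove S
    · rw [hmap] at h
      obtain ⟨a, haS, hLa⟩ := exists_lt_of_lt_csSup hSne h
      filter_upwards [haS] with h' hh'
      exact lt_of_lt_of_le hLa hh'
    · obtain ⟨a, haS, hLa⟩ := not_bddAbove_iff.mp hbdd L'
      filter_upwards [haS] with h' hh'
      exact lt_of_lt_of_le hLa hh'

private lemma inv_slope {d e : ℝ} (hd : 0 < d) (hde : d ≤ e) :
    -(1/e) ≤ -(1/d) + (e - d)/(d*d) := by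
  have he : 0 < e := hd.trans_le hde
  have e1 : 1/d - 1/e = (e - d)/(d*e) := by field_simp
  have e2 : (e - d)/(d*e) ≤ (e - d)/(d*d) := by
    gcongr
  linarith

private lemma barrier_le (T α β c K K' c' : ℝ) (hT : 0 < T) (hα : 0 < α) (hβ : 0 < β)
    (hc : 0 ≤ c) (hK : 0 < K) (hKK' : K < K') (hcc' : c < c') (u : ℝ → ℝ)
    (hu : ContinuousOn u (Icc 0 T)) (h0 : -K ≤ u 0)
    (hdini : ∀ t ∈ Ico (0:ℝ) T, u t ≤ 0 →
      (α + β) * (u t)^2 - β * c^2 ≤ diniLower u t) :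
    ∀ t ∈ Icc (0:ℝ) T, min (-(1/(α*t + 1/K'))) (-c') ≤ u t := by
  have hK'0 : 0 < K' := hK.trans hKK'
  have hc'0 : 0 < c' := hc.trans_lt hcc'
  set B : ℝ → ℝ := fun s => min (-(1/(α*s + 1/K'))) (-c') with hBdef
  have hden : ∀ s : ℝ, 0 ≤ s → 0 < α*s + 1/K' := by
    intro s hs; positivity
  have hBcont : ∀ t : ℝ, 0 ≤ t → ContinuousAt B t := by
    intro t ht
    have hc2 : ContinuousAt (fun s : ℝ => α*s + 1/K') t := by fun_prop
    have hc1 : ContinuousAt (fun s : ℝ => 1/(α*s + 1/K')) t :=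
      ContinuousAt.div (continuousAt_const : ContinuousAt (fun _ : ℝ => (1:ℝ)) t) hc2
        (hden t ht).ne'
    exact hc1.neg.min continuousAt_const
  by_contra hcon
  push_neg at hcon
  obtain ⟨t₁, ht₁, hut₁⟩ := hcon
  set S : Set ℝ := {t | t ∈ Icc 0 T ∧ u t < B t} with hSdef
  have hne : S.Nonempty := ⟨t₁, ht₁, hut₁⟩
  have hbdd : BddBelow S := ⟨0, fun s hs => hs.1.1⟩
  set t₀ : ℝ := sInf S with ht₀def
  have h0t₀ : 0 ≤ t₀ := le_csInf hne fun s hs => hs.1.1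
  have ht₀T : t₀ ≤ T := by
    obtain ⟨s, hs⟩ := hne
    exact le_trans (csInf_le hbdd hs) hs.1.2
  have ht₀Icc : t₀ ∈ Icc (0:ℝ) T := ⟨h0t₀, ht₀T⟩
  have hlt : ∀ s, s ∈ Ico 0 t₀ → B s ≤ u s := by
    intro s hs
    have hsn : s ∉ S := notMem_of_lt_csInf hs.2 hbdd
    have hsIcc : s ∈ Icc (0:ℝ) T := ⟨hs.1, le_trans hs.2.le ht₀T⟩
    exact le_of_not_gt fun h => hsn ⟨hsIcc, h⟩
  have hu_t₀ : ContinuousWithinAt u (Icc 0 T) t₀ := hu t₀ ht₀Icc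
  have hule : u t₀ ≤ B t₀ := by
    have hcl : t₀ ∈ closure S := csInf_mem_closure hne hbdd
    haveI hnb : (nhdsWithin t₀ S).NeBot := mem_closure_iff_nhdsWithin_neBot.mp hcl
    have h₂ : Tendsto u (nhdsWithin t₀ S) (nhds (u t₀)) :=
      hu_t₀.tendsto.mono_left (nhdsWithin_mono t₀ fun s hs => hs.1)
    have h₁ : Tendsto B (nhdsWithin t₀ S) (nhds (B t₀)) :=
      ((hBcont t₀ h0t₀).tendsto).mono_left nhdsWithin_le_nhds
    exact le_of_tendsto_of_tendsto h₂ h₁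
      (eventually_mem_nhdsWithin.mono fun s hs => hs.2.le)
  have hBle : B t₀ ≤ u t₀ := by
    rcases eq_or_lt_of_le h0t₀ with h00 | h00
    · have hlt0 : B 0 < u 0 := by
        have h1 : B 0 ≤ -(1/(α*0 + 1/K')) := min_le_left _ _
        have h2 : -(1/(α*0 + 1/K')) = -K' := by
          rw [mul_zero, zero_add, one_div_one_div]
        linarith
      rw [← h00]; exact hlt0.le
    · haveI : (nhdsWithin t₀ (Ico 0 t₀)).NeBot := by
        refine mem_closure_iff_nhdsWithin_neBot.mp ?_
        rw [closure_Ico h00.ne]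
        exact ⟨h0t₀, le_refl _⟩
      have h₂ : Tendsto u (nhdsWithin t₀ (Ico 0 t₀)) (nhds (u t₀)) :=
        hu_t₀.tendsto.mono_left
          (nhdsWithin_mono t₀ fun s hs => ⟨hs.1, le_trans hs.2.le ht₀T⟩)
      have h₁ : Tendsto B (nhdsWithin t₀ (Ico 0 t₀)) (nhds (B t₀)) :=
        ((hBcont t₀ h0t₀).tendsto).mono_left nhdsWithin_le_nhds
      exact le_of_tendsto_of_tendsto h₁ h₂
        (eventually_mem_nhdsWithin.mono fun s hs => hlt s hs)
  have heq : u t₀ = B t₀ := le_antisymm hule hBle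
  have ht₀nS : t₀ ∉ S := fun h => absurd h.2 (not_lt.mpr hBle)
  have ht₀ltT : t₀ < T := by
    rcases eq_or_lt_of_le ht₀T with hTT | hTT
    · exfalso
      obtain ⟨s, hs⟩ := hne
      have h1 : t₀ ≤ s := csInf_le hbdd hs
      have h2 : s ≤ T := hs.1.2
      have h3 : s = t₀ := le_antisymm (hTT ▸ h2) h1
      exact ht₀nS (h3 ▸ hs)
    · exact hTT
  have hBt₀c' : B t₀ ≤ -c' := min_le_right _ _
  have hut₀neg : u t₀ ≤ 0 := by rw [heq]; linarith
  have hd := hdini t₀ ⟨h0t₀, ht₀ltT⟩ hut₀neg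
  set M : ℝ := α * (u t₀)^2 with hMdef
  have hM0 : 0 ≤ M := by positivity
  have hML : M < (α + β) * (u t₀)^2 - β * c^2 := by
    have h1 : u t₀ ≤ -c' := heq ▸ hBt₀c'
    have hu2 : c'^2 ≤ (u t₀)^2 := by nlinarith
    have hcc2 : c^2 < c'^2 := by nlinarith
    nlinarith [mul_lt_mul_of_pos_left (lt_of_lt_of_le hcc2 hu2) hβ]
  set L' : ℝ := (M + ((α + β) * (u t₀)^2 - β * c^2))/2 with hL'def
  have hL'0 : 0 ≤ L' := by simp only [hL'def]; linarith
  have hML' : M < L' := by simp only [hL'def]; linarith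
  have hL'd : L' < diniLower u t₀ := lt_of_lt_of_le (by simp only [hL'def]; linarith) hd
  obtain ⟨δ, hδ, hIoo⟩ := mem_nhdsGT_iff_exists_Ioo_subset.mp (dini_ev hL'0 hL'd)
  have hBslope : ∀ h : ℝ, 0 ≤ h → B (t₀ + h) ≤ B t₀ + M * h := by
    intro h hh
    rcases le_or_gt (-(1/(α*t₀ + 1/K'))) (-c') with hcase | hcase
    · have hBt₀ : B t₀ = -(1/(α*t₀ + 1/K')) := min_eq_left hcase
      have hd1 : 0 < α*t₀ + 1/K' := hden t₀ h0t₀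
      have hde : α*t₀ + 1/K' ≤ α*(t₀+h) + 1/K' := by nlinarith
      have key := inv_slope hd1 hde
      have e3 : (α*(t₀+h) + 1/K' - (α*t₀ + 1/K'))/((α*t₀ + 1/K')*(α*t₀ + 1/K'))
          = α*(1/(α*t₀ + 1/K'))^2*h := by
        field_simp
        ring
      rw [e3] at key
      have hM' : M = α*(1/(α*t₀ + 1/K'))^2 := by
        rw [hMdef, heq, hBt₀]; ring
      calc B (t₀ + h) ≤ -(1/(α*(t₀+h) + 1/K')) := min_le_left _ _
        _ ≤ -(1/(α*t₀ + 1/K')) + α*(1/(α*t₀ + 1/K'))^2*h := key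
        _ = B t₀ + M * h := by rw [hBt₀, hM']
    · have hBt₀ : B t₀ = -c' := min_eq_right hcase.le
      have h1 : B (t₀ + h) ≤ -c' := min_le_right _ _
      have h2 : 0 ≤ M * h := mul_nonneg hM0 hh
      linarith
  obtain ⟨s, hsS, hslt⟩ := exists_lt_of_csInf_lt hne (show sInf S < t₀ + δ by
    rw [← ht₀def]; linarith [mem_Ioi.mp hδ])
  have hst₀ : t₀ ≤ s := csInf_le hbdd hsS
  have hsne : t₀ ≠ s := fun h => ht₀nS (h ▸ hsS)
  have hspos : 0 < s - t₀ := sub_pos.mpr (lt_of_le_of_ne hst₀ hsne)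
  have hmem : s - t₀ ∈ Ioo (0:ℝ) δ := ⟨hspos, by linarith⟩
  have hq : L' < (u (t₀ + (s - t₀)) - u t₀) / (s - t₀) := hIoo hmem
  rw [show t₀ + (s - t₀) = s by ring] at hq
  have husb : u t₀ + L' * (s - t₀) < u s := by
    have := (lt_div_iff₀ hspos).mp hq
    linarith
  have hBs : B s ≤ B t₀ + M * (s - t₀) := by
    have h5 := hBslope (s - t₀) hspos.le
    rwa [show t₀ + (s - t₀) = s by ring] at h5
  have hfin : B s < u s := by
    have hMh : M * (s - t₀) < L' * (s - t₀) := mul_lt_mul_of_pos_right hML' hspos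
    calc B s ≤ B t₀ + M * (s - t₀) := hBs
      _ = u t₀ + M * (s - t₀) := by rw [heq]
      _ < u t₀ + L' * (s - t₀) := by linarith
      _ < u s := husb
  exact absurd hsS.2 (not_lt.mpr hfin.le)

/-- The ODE comparison lemma underlying Proposition 2.1. -/
theorem stmt_17 (T α β c K : ℝ) (hT : 0 < T) (hα : 0 < α) (hβ : 0 < β)
    (hc : 0 ≤ c) (hK : 0 < K) (u : ℝ → ℝ)
    (hu : ContinuousOn u (Icc 0 T)) (h0 : -K ≤ u 0)
    (hdini : ∀ t ∈ Ico (0:ℝ) T, u t ≤ 0 →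
      (α + β) * (u t)^2 - β * c^2 ≤ diniLower u t) :
    ∀ t ∈ Icc (0:ℝ) T, min (-(1/(α*t + 1/K))) (-c) ≤ u t := by
  intro t ht
  have key : ∀ ε : ℝ, ε ∈ Ioi (0:ℝ) →
      min (-(1/(α*t + 1/(K+ε)))) (-(c+ε)) ≤ u t := by
    intro ε hε
    exact barrier_le T α β c K (K+ε) (c+ε) hT hα hβ hc hK (by linarith [mem_Ioi.mp hε])
      (by linarith [mem_Ioi.mp hε]) u hu h0 hdini t ht
  have hden : ∀ ε : ℝ, 0 ≤ ε → (0:ℝ) < α*t + 1/(K+ε) := by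
    intro ε hε
    have h1 := ht.1
    positivity
  have hca : ContinuousAt (fun ε : ℝ => min (-(1/(α*t + 1/(K+ε)))) (-(c+ε))) 0 := by
    have hc3 : ContinuousAt (fun ε : ℝ => 1/(K+ε)) 0 :=
      ContinuousAt.div (continuousAt_const : ContinuousAt (fun _ : ℝ => (1:ℝ)) 0)
        (by fun_prop) (by simp only [add_zero]; exact hK.ne')
    have hc2 : ContinuousAt (fun ε : ℝ => α*t + 1/(K+ε)) 0 := continuousAt_const.add hc3
    have hc1 : ContinuousAt (fun ε : ℝ => 1/(α*t + 1/(K+ε))) 0 :=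
      ContinuousAt.div (continuousAt_const : ContinuousAt (fun _ : ℝ => (1:ℝ)) 0) hc2
        (hden 0 le_rfl).ne'
    exact hc1.neg.min ((continuousAt_const.add continuousAt_id).neg)
  have htend : Tendsto (fun ε : ℝ => min (-(1/(α*t + 1/(K+ε)))) (-(c+ε)))
      (nhdsWithin 0 (Ioi 0)) (nhds (min (-(1/(α*t + 1/K))) (-c))) := by
    have h6 := hca.continuousWithinAt (s := Ioi (0:ℝ))
    simpa [add_zero] using h6.tendsto
  exact le_of_tendsto htend (eventually_nhdsWithin_of_forall key)

end
end

section
/- Let k ≥ 1 be a real number, C ≥ 0, and let λ, μ, ν be real numbers with λ ≥ μ ≥ ν, ν < 0, λ + μ ≥ 0, and λ + μ + k ν ≥ −C. Then λ² + μ² + (k+1) λ μ ≥ −(k+1)⁴ C² / (4 k²). -/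
open Set

/-- The elementary eigenvalue inequality from the proof of
Proposition 2.2. -/
theorem stmt_18 (k C lam mu nu : ℝ) (hk : 1 ≤ k) (hC : 0 ≤ C)
    (h1 : mu ≤ lam) (h2 : nu ≤ mu) (h3 : nu < 0) (h4 : 0 ≤ lam + mu)
    (h5 : -C ≤ lam + mu + k*nu) :
    -((k+1)^4 * C^2 / (4*k^2)) ≤ lam^2 + mu^2 + (k+1)*lam*mu := by
  have hk0 : (0:ℝ) < k := lt_of_lt_of_le one_pos hk
  have hk2 : (0:ℝ) < 4 * k^2 := by positivity
  have hlam : 0 ≤ lam := by linarith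
  have ht : -C ≤ lam + (k+1)*mu := by nlinarith
  rw [neg_le, le_div_iff₀ hk2]
  rcases le_or_gt 0 (lam + (k+1)*mu) with h | h
  · have hE : 0 ≤ lam^2 + mu^2 + (k+1)*lam*mu := by
      nlinarith [mul_nonneg hlam h, sq_nonneg mu]
    nlinarith [mul_nonneg hE hk2.le, sq_nonneg ((k+1)^2*C)]
  · have hk1 : (0:ℝ) < (k+1)^2 := by positivity
    have key : (lam+(k+1)*mu)^2*(4-(k+1)^2) ≤ 4*(lam^2 + mu^2 + (k+1)*lam*mu) := by
      nlinarith [sq_nonneg (2*lam - (lam+(k+1)*mu)*(2-(k+1)^2)), hk1]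
    have ht2 : (lam+(k+1)*mu)^2 ≤ C^2 := by nlinarith
    have hge : (0:ℝ) ≤ (k+1)^2 - 4 := by nlinarith
    nlinarith [key, mul_le_mul_of_nonneg_left (mul_le_mul_of_nonneg_right ht2 hge) (sq_nonneg k),
      mul_nonneg (mul_nonneg hC hC) (by nlinarith : (0:ℝ) ≤ (k+1)^4 - k^2*((k+1)^2-4))]
end

section
/- Let n ≥ 1 be an integer, let A and B be n×n real symmetric positive definite matrices, and let C > 0 and D > 0 be real numbers. If A − (1/C) B is positive semidefinite and det A ≤ D · det B, then D C^{n−1} B − A is positive semidefinite. -/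
/-!
Conjugating by a unit `T` with `Tᴴ B T = 1` (e.g. `T = B^{-1/2}`) reduces everything to `B = 1`:
the matrix `M = Tᴴ A T` satisfies `M ≥ C⁻¹`, and `det M = det A / det B ≤ D`. Every eigenvalue
of `M` is then at most `D` divided by the product of the other `n - 1` eigenvalues, each of which
is at least `C⁻¹`; so `M ≤ D C^{n-1}`, and conjugating back gives `A ≤ D C^{n-1} B`.
-/

open Matrix
open scoped MatrixOrder

theorem Fintype.pow_card_sub_one_mul_le_prod {ι R : Type*} [Fintype ι] [CommSemiring R]
    [PartialOrder R] [IsOrderedRing R] {f : ι → R} {c : R} (hc : 0 ≤ c) (hf : ∀ i, c ≤ f i)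
    (j : ι) :
    c ^ (Fintype.card ι - 1) * f j ≤ ∏ i, f i := by
  classical
  rw [← Finset.prod_erase_mul _ _ (Finset.mem_univ j), ← Finset.card_univ,
    ← Finset.card_erase_of_mem (Finset.mem_univ j), ← Finset.prod_const]
  exact mul_le_mul_of_nonneg_right
    (Finset.prod_le_prod (fun _ _ ↦ hc) fun i _ ↦ hf i) (hc.trans (hf j))

theorem IsUnit.star_left_conjugate_le_conjugate_iff {R : Type*} [Ring R] [PartialOrder R]
    [StarRing R] [StarOrderedRing R] {u x y : R} (hu : IsUnit u) :
    star u * x * u ≤ star u * y * u ↔ x ≤ y := by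
  rw [← sub_nonneg, ← sub_mul, ← mul_sub, hu.star_left_conjugate_nonneg_iff, sub_nonneg]

variable {ι : Type*} [Fintype ι] [DecidableEq ι]

namespace Matrix

theorem PosDef.exists_isUnit_star_mul_mul_eq_one {B : Matrix ι ι ℝ} (hB : B.PosDef) :
    ∃ T : Matrix ι ι ℝ, IsUnit T ∧ star T * B * T = 1 := by
  set S := CFC.sqrt B
  have hS : IsSelfAdjoint S := CFC.sqrt_nonneg B |>.isSelfAdjoint
  have hSS : S * S = B := CFC.sqrt_mul_sqrt_self B hB.posSemidef.nonneg
  have hSu : IsUnit S := (CFC.isUnit_sqrt_iff B hB.posSemidef.nonneg).2 hB.isUnit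
  have hSdet : IsUnit S.det := (isUnit_iff_isUnit_det S).1 hSu
  refine ⟨S⁻¹, isUnit_nonsing_inv_iff.2 hSu, ?_⟩
  rw [star_eq_conjTranspose, conjTranspose_nonsing_inv, ← star_eq_conjTranspose, hS.star_eq,
    ← hSS, ← mul_assoc, nonsing_inv_mul _ hSdet, one_mul, mul_nonsing_inv _ hSdet]

theorem le_smul_one_of_smul_one_le_of_det_le {M : Matrix ι ι ℝ} {c d : ℝ} (hc : 0 < c)
    (hcM : c • 1 ≤ M) (hdet : M.det ≤ d) : M ≤ (d / c ^ (Fintype.card ι - 1)) • 1 := by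
  have hM : M.IsHermitian := by
    simpa using (le_iff.1 hcM).isHermitian.add (isHermitian_one.smul (IsSelfAdjoint.all c))
  rw [← Algebra.algebraMap_eq_smul_one] at hcM ⊢
  rw [algebraMap_le_iff_le_spectrum, hM.spectrum_real_eq_range_eigenvalues] at hcM
  rw [le_algebraMap_iff_spectrum_le, hM.spectrum_real_eq_range_eigenvalues]
  rintro _ ⟨j, rfl⟩
  rw [le_div_iff₀' (by positivity)]
  calc c ^ (Fintype.card ι - 1) * hM.eigenvalues j ≤ ∏ i, hM.eigenvalues i :=
        Fintype.pow_card_sub_one_mul_le_prod hc.le (fun i ↦ hcM _ ⟨i, rfl⟩) j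
    _ = M.det := by simp [hM.det_eq_prod_eigenvalues]
    _ ≤ d := hdet

end Matrix

theorem stmt_19_general (n : ℕ) (A B : Matrix (Fin n) (Fin n) ℝ)
    (hB : B.PosDef) (C D : ℝ) (hC : 0 < C)
    (h1 : (A - C⁻¹ • B).PosSemidef) (h2 : A.det ≤ D * B.det) :
    ((D * C^(n-1)) • B - A).PosSemidef := by
  obtain ⟨T, hT, hTBT⟩ := hB.exists_isUnit_star_mul_mul_eq_one
  have conj_smul (c : ℝ) : star T * (c • B) * T = c • 1 := by
    rw [mul_smul_comm, smul_mul_assoc, hTBT]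
  set M := star T * A * T
  have hCM : C⁻¹ • 1 ≤ M := by
    rw [← conj_smul, hT.star_left_conjugate_le_conjugate_iff]
    exact h1
  have hdet : M.det ≤ D := by
    have hMB : M.det * B.det = A.det := by
      have := congrArg det hTBT
      simp only [M, det_mul, det_one] at this ⊢
      linear_combination A.det * this
    exact le_of_mul_le_mul_right (hMB ▸ h2) hB.det_pos
  have hMD := le_smul_one_of_smul_one_le_of_det_le (inv_pos.2 hC) hCM hdet
  rwa [Fintype.card_fin, inv_pow, div_inv_eq_mul, ← conj_smul,
    hT.star_left_conjugate_le_conjugate_iff] at hMD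

/-- The linear algebra pinching lemma from step (e3.2.1) in the proof of
Theorem 3.4. -/
theorem stmt_19 (n : ℕ) (hn : 1 ≤ n) (A B : Matrix (Fin n) (Fin n) ℝ)
    (hA : A.PosDef) (hB : B.PosDef) (C D : ℝ) (hC : 0 < C) (hD : 0 < D)
    (h1 : (A - C⁻¹ • B).PosSemidef) (h2 : A.det ≤ D * B.det) :
    ((D * C^(n-1)) • B - A).PosSemidef :=
  stmt_19_general n A B hB C D hC h1 h2
end
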